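/- lim_{q→∞} β^{q−2}(√(3/(q+1))) = 1 − Φ(√3) > 0. In particular, the largest empty cap discrepancy L^{q−2}(Π(ȳ^q)) = β^{q−2}(√(3/(q+1))) of the set of permutations of the regular configuration ȳ^q does not tend to 0 as q → ∞ (the regular configurations are not asymptotically permutation-full). -/

import Mathlib

open MeasureTheory Filter

/-- The standard normal cumulative distribution function. -/
noncomputable def Phi (x : ℝ) : ℝ :=
  ∫ t in Set.Iic x, Real.exp (-t ^ 2 / 2) / Real.sqrt (2 * Real.pi)

/-- `betaCap q t` is the normalized surface area `β^{q-2}(t)` of a spherical cap of angular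
half-width `arccos t` on a `(q-2)`-dimensional sphere. -/
noncomputable def betaCap (q : ℕ) (t : ℝ) : ℝ :=
  (Real.Gamma (((q : ℝ) - 1) / 2) / (Real.Gamma (1 / 2) * Real.Gamma (((q : ℝ) - 2) / 2))) *
    ∫ v in t..1, (1 - v ^ 2) ^ ((q : ℝ) / 2 - 2)

open Real in
lemma gamma_sq_mid_le {a b : ℝ} (ha : 0 < a) (hb : 0 < b) :
    Gamma ((a + b) / 2) ^ 2 ≤ Gamma a * Gamma b := by
  have h := convexOn_log_Gamma.2 (Set.mem_Ioi.2 ha) (Set.mem_Ioi.2 hb)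
    (by norm_num : (0:ℝ) ≤ 1/2) (by norm_num : (0:ℝ) ≤ 1/2) (by norm_num)
  simp only [smul_eq_mul, Function.comp_apply] at h
  rw [show (1/2:ℝ) * a + 1/2 * b = (a + b)/2 by ring] at h
  have hm : 0 < (a + b)/2 := by positivity
  have h2 := Real.exp_le_exp.2
    (show 2 * log (Gamma ((a+b)/2)) ≤ log (Gamma a) + log (Gamma b) by linarith)
  rw [Real.exp_add, Real.exp_log (Gamma_pos_of_pos ha), Real.exp_log (Gamma_pos_of_pos hb)] at h2
  calc Gamma ((a+b)/2) ^ 2 = exp (2 * log (Gamma ((a+b)/2))) := by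
        rw [two_mul, Real.exp_add, Real.exp_log (Gamma_pos_of_pos hm), sq]
    _ ≤ _ := h2

open Real in
lemma wendel_upper {x : ℝ} (hx : 1 ≤ x) : Gamma (x + 1/2) ≤ Gamma x * Real.sqrt x := by
  have hx0 : 0 < x := by linarith
  have h := gamma_sq_mid_le hx0 (show (0:ℝ) < x + 1 by linarith)
  rw [Gamma_add_one hx0.ne', show (x + (x+1))/2 = x + 1/2 by ring] at h
  have h2 : Gamma (x + 1/2) ^ 2 ≤ (Gamma x * Real.sqrt x) ^ 2 := by
    have e : (Gamma x * Real.sqrt x) ^ 2 = Gamma x * (x * Gamma x) := by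
      rw [mul_pow, sq_sqrt hx0.le]; ring
    rw [e]; exact h
  have h3 := Real.sqrt_le_sqrt h2
  rwa [Real.sqrt_sq (Gamma_pos_of_pos (by linarith : (0:ℝ) < x + 1/2)).le,
    Real.sqrt_sq (mul_nonneg (Gamma_pos_of_pos hx0).le (Real.sqrt_nonneg x))] at h3

open Real in
lemma wendel_lower {x : ℝ} (hx : 1 ≤ x) :
    Gamma x * x / Real.sqrt (x + 1/2) ≤ Gamma (x + 1/2) := by
  have hx0 : 0 < x := by linarith
  have h12 : (0:ℝ) < x + 1/2 := by linarith
  have h := gamma_sq_mid_le h12 (show (0:ℝ) < x + 3/2 by linarith)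
  rw [show (x + 1/2 + (x + 3/2))/2 = x + 1 by ring,
      show x + 3/2 = (x + 1/2) + 1 by ring,
      Gamma_add_one h12.ne', Gamma_add_one hx0.ne'] at h
  have h2 : (Gamma x * x) ^ 2 ≤ (Gamma (x + 1/2) * Real.sqrt (x + 1/2)) ^ 2 := by
    have e : (Gamma (x+1/2) * Real.sqrt (x+1/2)) ^ 2
        = Gamma (x+1/2) * ((x+1/2) * Gamma (x+1/2)) := by
      rw [mul_pow, sq_sqrt h12.le]; ring
    rw [e]
    calc (Gamma x * x)^2 = (x * Gamma x)^2 := by ring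
      _ ≤ _ := h
  have h3 := Real.sqrt_le_sqrt h2
  rw [Real.sqrt_sq (mul_nonneg (Gamma_pos_of_pos hx0).le hx0.le),
      Real.sqrt_sq (mul_nonneg (Gamma_pos_of_pos h12).le (Real.sqrt_nonneg _))] at h3
  rw [div_le_iff₀ (Real.sqrt_pos.2 h12)]
  exact h3

open Real in
lemma ratio_tendsto :
    Tendsto (fun q : ℕ => Gamma (((q:ℝ) - 1)/2) / Gamma (((q:ℝ) - 2)/2) / Real.sqrt ((q:ℝ) + 1))
      atTop (nhds (Real.sqrt 2)⁻¹) := by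
  have hbase : Tendsto (fun q : ℕ => 1/((q:ℝ)+1)) atTop (nhds 0) :=
    tendsto_one_div_add_atTop_nhds_zero_nat
  have h1 : Tendsto (fun q : ℕ => ((q:ℝ)-2)/2/((q:ℝ)+1)) atTop (nhds (1/2)) := by
    have h : Tendsto (fun q : ℕ => (1:ℝ)/2 - 3/2 * (1/((q:ℝ)+1))) atTop
        (nhds ((1:ℝ)/2 - 3/2 * 0)) := tendsto_const_nhds.sub (tendsto_const_nhds.mul hbase)
    rw [mul_zero, sub_zero] at h
    refine h.congr fun q => ?_
    have hq : ((q:ℝ)+1) ≠ 0 := by positivity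
    field_simp
    ring
  have hq1 : Tendsto (fun q : ℕ => (q:ℝ) - 1) atTop atTop := by
    have := tendsto_atTop_add_const_right atTop (-1 : ℝ) tendsto_natCast_atTop_atTop
    simpa [sub_eq_add_neg] using this
  have h2 : Tendsto (fun q : ℕ => (((q:ℝ)-2)/2)/(((q:ℝ)-1)/2)) atTop (nhds 1) := by
    have hz : Tendsto (fun q : ℕ => ((q:ℝ)-1)⁻¹) atTop (nhds 0) :=
      tendsto_inv_atTop_zero.comp hq1
    have h : Tendsto (fun q : ℕ => (1:ℝ) - ((q:ℝ)-1)⁻¹) atTop (nhds ((1:ℝ) - 0)) :=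
      tendsto_const_nhds.sub hz
    rw [sub_zero] at h
    refine h.congr' ?_
    filter_upwards [eventually_ge_atTop 2] with q hq
    have hq' : (2:ℝ) ≤ (q:ℝ) := by exact_mod_cast hq
    have : ((q:ℝ) - 1) ≠ 0 := by linarith
    field_simp
    ring
  have hU : Tendsto (fun q : ℕ => Real.sqrt (((q:ℝ)-2)/2/((q:ℝ)+1))) atTop
      (nhds (Real.sqrt 2)⁻¹) := by
    have := (Real.continuous_sqrt.tendsto (1/2)).comp h1
    simpa [Function.comp_def, one_div, Real.sqrt_inv] using this
  have hfac : Tendsto (fun q : ℕ => Real.sqrt ((((q:ℝ)-2)/2)/(((q:ℝ)-1)/2))) atTop (nhds 1) := by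
    have := (Real.continuous_sqrt.tendsto 1).comp h2
    simpa [Function.comp_def] using this
  have hL : Tendsto (fun q : ℕ =>
      Real.sqrt (((q:ℝ)-2)/2/((q:ℝ)+1)) * Real.sqrt ((((q:ℝ)-2)/2)/(((q:ℝ)-1)/2))) atTop
      (nhds (Real.sqrt 2)⁻¹) := by
    have := hU.mul hfac
    simpa using this
  refine tendsto_of_tendsto_of_tendsto_of_le_of_le' hL hU ?_ ?_
  · -- lower bound
    filter_upwards [eventually_ge_atTop 4] with q hq
    have hq4 : (4:ℝ) ≤ (q:ℝ) := by exact_mod_cast hq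
    obtain ⟨x, hxdef⟩ : ∃ x : ℝ, x = ((q:ℝ)-2)/2 := ⟨_, rfl⟩
    have ex : ((q:ℝ)-1)/2 = x + 1/2 := by rw [hxdef]; ring
    rw [← hxdef, ex]
    have hx : 1 ≤ x := by rw [hxdef]; linarith
    have hx0 : 0 < x := by linarith
    have hΓ : 0 < Gamma x := Gamma_pos_of_pos hx0
    have hs : 0 < Real.sqrt ((q:ℝ)+1) := Real.sqrt_pos.2 (by linarith)
    have h12 : (0:ℝ) < x + 1/2 := by linarith
    calc Real.sqrt (x/((q:ℝ)+1)) * Real.sqrt (x/(x + 1/2))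
        = x / (Real.sqrt ((q:ℝ)+1) * Real.sqrt (x + 1/2)) := by
          rw [Real.sqrt_div hx0.le, Real.sqrt_div hx0.le, div_mul_div_comm,
            Real.mul_self_sqrt hx0.le]
      _ ≤ Gamma (x + 1/2) / Gamma x / Real.sqrt ((q:ℝ)+1) := by
          rw [div_div, div_le_div_iff₀ (by positivity) (by positivity)]
          have hw := wendel_lower hx
          rw [div_le_iff₀ (Real.sqrt_pos.2 h12)] at hw
          calc x * (Gamma x * Real.sqrt ((q:ℝ)+1))
              = (Gamma x * x) * Real.sqrt ((q:ℝ)+1) := by ring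
            _ ≤ (Gamma (x+1/2) * Real.sqrt (x+1/2)) * Real.sqrt ((q:ℝ)+1) :=
                mul_le_mul_of_nonneg_right hw hs.le
            _ = Gamma (x+1/2) * (Real.sqrt ((q:ℝ)+1) * Real.sqrt (x+1/2)) := by ring
  · -- upper bound
    filter_upwards [eventually_ge_atTop 4] with q hq
    have hq4 : (4:ℝ) ≤ (q:ℝ) := by exact_mod_cast hq
    obtain ⟨x, hxdef⟩ : ∃ x : ℝ, x = ((q:ℝ)-2)/2 := ⟨_, rfl⟩
    have ex : ((q:ℝ)-1)/2 = x + 1/2 := by rw [hxdef]; ring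
    rw [← hxdef, ex]
    have hx : 1 ≤ x := by rw [hxdef]; linarith
    have hx0 : 0 < x := by linarith
    have hΓ : 0 < Gamma x := Gamma_pos_of_pos hx0
    have hs : 0 < Real.sqrt ((q:ℝ)+1) := Real.sqrt_pos.2 (by linarith)
    rw [Real.sqrt_div hx0.le, div_div, div_le_div_iff₀ (by positivity) (by positivity)]
    have hw := wendel_upper hx
    calc Gamma (x+1/2) * Real.sqrt ((q:ℝ)+1)
        ≤ (Gamma x * Real.sqrt x) * Real.sqrt ((q:ℝ)+1) :=
          mul_le_mul_of_nonneg_right hw hs.le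
      _ = Real.sqrt x * (Gamma x * Real.sqrt ((q:ℝ)+1)) := by ring

lemma integrable_gauss2 : Integrable (fun t : ℝ => Real.exp (-t ^ 2 / 2)) := by
  have e : (fun t : ℝ => Real.exp (-t ^ 2 / 2)) = fun t : ℝ => Real.exp (-(1/2 : ℝ) * t ^ 2) := by
    funext t
    congr 1
    ring
  rw [e]
  exact integrable_exp_neg_mul_sq (by norm_num)

open Real in
lemma Nq_tendsto :
    Tendsto (fun q : ℕ => ∫ u, Set.indicator (Set.Ioc (Real.sqrt 3) (Real.sqrt ((q:ℝ)+1)))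
        (fun u => (1 - u ^ 2/((q:ℝ)+1)) ^ ((q:ℝ)/2 - 2)) u) atTop
      (nhds (∫ u in Set.Ioi (Real.sqrt 3), Real.exp (-u ^ 2/2))) := by
  rw [← integral_indicator measurableSet_Ioi]
  refine tendsto_integral_filter_of_dominated_convergence (fun u => Real.exp (-(1/4) * u ^ 2))
    ?_ ?_ ?_ ?_
  · -- measurability
    filter_upwards [eventually_ge_atTop 4] with q hq
    have hq4 : (4:ℝ) ≤ (q:ℝ) := by exact_mod_cast hq
    have hp : (0:ℝ) ≤ (q:ℝ)/2 - 2 := by linarith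
    have hcont : Continuous fun u : ℝ => (1 - u ^ 2/((q:ℝ)+1)) ^ ((q:ℝ)/2 - 2) :=
      (Real.continuous_rpow_const hp).comp
        (continuous_const.sub ((continuous_pow 2).div_const _))
    exact (hcont.aestronglyMeasurable).indicator measurableSet_Ioc
  · -- bound
    filter_upwards [eventually_ge_atTop 17] with q hq
    refine ae_of_all _ fun u => ?_
    have hq' : (17:ℝ) ≤ (q:ℝ) := by exact_mod_cast hq
    by_cases hu : u ∈ Set.Ioc (Real.sqrt 3) (Real.sqrt ((q:ℝ)+1))
    · rw [Set.indicator_of_mem hu]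
      obtain ⟨hu1, hu2⟩ := hu
      have hu0 : 0 < u := lt_of_le_of_lt (Real.sqrt_nonneg 3) hu1
      have husq : u ^ 2 ≤ (q:ℝ)+1 := (Real.le_sqrt hu0.le (by positivity)).mp hu2
      have hb0 : 0 ≤ 1 - u ^ 2/((q:ℝ)+1) := by
        rw [sub_nonneg, div_le_one (by positivity)]; exact husq
      have hp : (0:ℝ) ≤ (q:ℝ)/2 - 2 := by linarith
      rw [Real.norm_eq_abs, abs_of_nonneg (Real.rpow_nonneg hb0 _)]
      have step1 : (1 - u ^ 2/((q:ℝ)+1)) ^ ((q:ℝ)/2-2)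
          ≤ (Real.exp (-(u ^ 2/((q:ℝ)+1)))) ^ ((q:ℝ)/2-2) := by
        refine Real.rpow_le_rpow hb0 ?_ hp
        have := Real.add_one_le_exp (-(u ^ 2/((q:ℝ)+1)))
        linarith
      have step2 : (Real.exp (-(u ^ 2/((q:ℝ)+1)))) ^ ((q:ℝ)/2-2)
          = Real.exp (-(u ^ 2/((q:ℝ)+1)) * ((q:ℝ)/2-2)) := (Real.exp_mul _ _).symm
      have step3 : Real.exp (-(u ^ 2/((q:ℝ)+1)) * ((q:ℝ)/2-2)) ≤ Real.exp (-(1/4) * u ^ 2) := by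
        refine Real.exp_le_exp.2 ?_
        have hfrac : (1:ℝ)/4 ≤ ((q:ℝ)/2-2)/((q:ℝ)+1) := by
          rw [le_div_iff₀ (by positivity)]; linarith
        have hmul : (1/4:ℝ) * u ^ 2 ≤ (((q:ℝ)/2-2)/((q:ℝ)+1)) * u ^ 2 :=
          mul_le_mul_of_nonneg_right hfrac (sq_nonneg u)
        have e : (((q:ℝ)/2-2)/((q:ℝ)+1)) * u ^ 2 = u ^ 2/((q:ℝ)+1) * ((q:ℝ)/2-2) := by ring
        linarith [e ▸ hmul]
      calc (1 - u ^ 2/((q:ℝ)+1)) ^ ((q:ℝ)/2-2)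
          ≤ (Real.exp (-(u ^ 2/((q:ℝ)+1)))) ^ ((q:ℝ)/2-2) := step1
        _ = Real.exp (-(u ^ 2/((q:ℝ)+1)) * ((q:ℝ)/2-2)) := step2
        _ ≤ Real.exp (-(1/4) * u ^ 2) := step3
    · rw [Set.indicator_of_notMem hu]
      simp [Real.exp_nonneg]
  · exact integrable_exp_neg_mul_sq (by norm_num)
  · -- pointwise limit
    refine ae_of_all _ fun u => ?_
    by_cases hu : Real.sqrt 3 < u
    · rw [Set.indicator_of_mem (Set.mem_Ioi.2 hu)]
      have hu0 : 0 < u := lt_of_le_of_lt (Real.sqrt_nonneg 3) hu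
      have hq1 : Tendsto (fun q : ℕ => (q:ℝ) + 1) atTop atTop :=
        tendsto_atTop_add_const_right atTop (1 : ℝ) tendsto_natCast_atTop_atTop
      have hlog : Tendsto (fun q : ℕ => ((q:ℝ)+1) * Real.log (1 + (-u ^ 2)/((q:ℝ)+1)))
          atTop (nhds (-u ^ 2)) := by
        have := (Real.tendsto_mul_log_one_add_div_atTop (-u ^ 2)).comp hq1
        simpa [Function.comp_def] using this
      have hfrac : Tendsto (fun q : ℕ => ((q:ℝ)/2-2)/((q:ℝ)+1)) atTop (nhds (1/2)) := by
        have hbase : Tendsto (fun q : ℕ => 1/((q:ℝ)+1)) atTop (nhds 0) :=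
          tendsto_one_div_add_atTop_nhds_zero_nat
        have h : Tendsto (fun q : ℕ => (1:ℝ)/2 - 5/2 * (1/((q:ℝ)+1))) atTop
            (nhds ((1:ℝ)/2 - 5/2 * 0)) := tendsto_const_nhds.sub (tendsto_const_nhds.mul hbase)
        rw [mul_zero, sub_zero] at h
        refine h.congr fun q => ?_
        have hq : ((q:ℝ)+1) ≠ 0 := by positivity
        field_simp
        ring
      have hexp : Tendsto (fun q : ℕ =>
          Real.exp ((((q:ℝ)+1) * Real.log (1 + (-u ^ 2)/((q:ℝ)+1))) * (((q:ℝ)/2-2)/((q:ℝ)+1))))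
          atTop (nhds (Real.exp (-u ^ 2 * (1/2)))) :=
        (Real.continuous_exp.tendsto _).comp (hlog.mul hfrac)
      rw [show -u ^ 2 * (1/2) = -u ^ 2/2 by ring] at hexp
      refine hexp.congr' ?_
      filter_upwards [eventually_gt_atTop (⌈u ^ 2⌉₊)] with q hq
      have hq2 : u ^ 2 < (q:ℝ) + 1 := by
        have h1 : u ^ 2 ≤ (⌈u ^ 2⌉₊ : ℝ) := Nat.le_ceil _
        have h2 : ((⌈u ^ 2⌉₊ : ℕ) : ℝ) < (q:ℝ) + 1 := by exact_mod_cast Nat.lt_succ_of_lt hq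
        linarith
      have hmem : u ∈ Set.Ioc (Real.sqrt 3) (Real.sqrt ((q:ℝ)+1)) :=
        ⟨hu, Real.le_sqrt_of_sq_le hq2.le⟩
      rw [Set.indicator_of_mem hmem]
      have hb : 0 < 1 - u ^ 2/((q:ℝ)+1) := by
        rw [sub_pos, div_lt_one (by positivity)]; exact hq2
      have hqne : ((q:ℝ)+1) ≠ 0 := by positivity
      rw [show (1:ℝ) + (-u ^ 2)/((q:ℝ)+1) = 1 - u ^ 2/((q:ℝ)+1) by ring]
      rw [Real.rpow_def_of_pos hb]
      congr 1
      field_simp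
    · have hz : ∀ q : ℕ, Set.indicator (Set.Ioc (Real.sqrt 3) (Real.sqrt ((q:ℝ)+1)))
          (fun u => (1 - u ^ 2/((q:ℝ)+1)) ^ ((q:ℝ)/2 - 2)) u = 0 := fun q =>
        Set.indicator_of_notMem (fun h => hu h.1) _
      rw [Set.indicator_of_notMem (show u ∉ Set.Ioi (Real.sqrt 3) from hu)]
      simp only [hz]
      exact tendsto_const_nhds

lemma gauss_total : ∫ t : ℝ, Real.exp (-t ^ 2 / 2) = Real.sqrt (2 * Real.pi) := by
  have e : (fun t : ℝ => Real.exp (-t ^ 2 / 2)) = fun t : ℝ => Real.exp (-(1/2 : ℝ) * t ^ 2) := by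
    funext t
    congr 1
    ring
  rw [e, integral_gaussian]
  congr 1
  rw [div_div_eq_mul_div, div_one, mul_comm]

lemma one_sub_Phi : 1 - Phi (Real.sqrt 3)
    = (∫ u in Set.Ioi (Real.sqrt 3), Real.exp (-u ^ 2 / 2)) / Real.sqrt (2 * Real.pi) := by
  have hπ : 0 < Real.sqrt (2 * Real.pi) := Real.sqrt_pos.2 (by positivity)
  have hint : Integrable (fun t : ℝ => Real.exp (-t ^ 2 / 2) / Real.sqrt (2 * Real.pi)) :=
    integrable_gauss2.div_const _
  have hsplit := intervalIntegral.integral_Iic_add_Ioi (b := Real.sqrt 3)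
    hint.integrableOn hint.integrableOn
  have htot : ∫ t : ℝ, Real.exp (-t ^ 2 / 2) / Real.sqrt (2 * Real.pi) = 1 := by
    rw [integral_div, gauss_total, div_self hπ.ne']
  have hIoi : (∫ t in Set.Ioi (Real.sqrt 3), Real.exp (-t ^ 2 / 2) / Real.sqrt (2 * Real.pi))
      = (∫ u in Set.Ioi (Real.sqrt 3), Real.exp (-u ^ 2 / 2)) / Real.sqrt (2 * Real.pi) :=
    integral_div _ _
  have hPhi : Phi (Real.sqrt 3)
      = ∫ t in Set.Iic (Real.sqrt 3), Real.exp (-t ^ 2 / 2) / Real.sqrt (2 * Real.pi) := rfl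
  rw [htot] at hsplit
  rw [hPhi, ← hIoi]
  linarith

lemma J_pos : 0 < ∫ u in Set.Ioi (Real.sqrt 3), Real.exp (-u ^ 2 / 2) := by
  rw [setIntegral_pos_iff_support_of_nonneg_ae
    (ae_of_all _ fun u => (Real.exp_pos _).le) integrable_gauss2.integrableOn]
  have hsupp : (Function.support fun u : ℝ => Real.exp (-u ^ 2 / 2)) = Set.univ := by
    ext u
    simp [Function.mem_support, Real.exp_ne_zero]
  rw [hsupp, Set.univ_inter]
  simp [Real.volume_Ioi]

/-- Proposition 3.1: `β^{q-2}(√(3/(q+1))) → 1 - Φ(√3) > 0`; in particular the largest empty cap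
discrepancy `L^{q-2}(Π(ȳ^q)) = β^{q-2}(√(3/(q+1)))` of the permutations of the regular
configuration does not tend to `0`. -/
theorem stmt6 :
    Tendsto (fun q : ℕ => betaCap q (Real.sqrt (3 / ((q : ℝ) + 1)))) atTop
        (nhds (1 - Phi (Real.sqrt 3))) ∧
    0 < 1 - Phi (Real.sqrt 3) ∧
    ¬ Tendsto (fun q : ℕ => betaCap q (Real.sqrt (3 / ((q : ℝ) + 1)))) atTop (nhds 0) := by
  have hval : 1 - Phi (Real.sqrt 3)
      = (Real.sqrt 2)⁻¹ * ((Real.sqrt Real.pi)⁻¹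
          * ∫ u in Set.Ioi (Real.sqrt 3), Real.exp (-u ^ 2/2)) := by
    rw [one_sub_Phi, Real.sqrt_mul (by norm_num : (0:ℝ) ≤ 2), div_eq_mul_inv, mul_inv]
    ring
  have hpos : 0 < 1 - Phi (Real.sqrt 3) := by
    rw [hval]
    have hJ := J_pos
    have h2 : 0 < (Real.sqrt 2)⁻¹ := by positivity
    have hp : 0 < (Real.sqrt Real.pi)⁻¹ := by
      have := Real.pi_pos
      positivity
    exact mul_pos h2 (mul_pos hp hJ)
  have hmain : Tendsto (fun q : ℕ => betaCap q (Real.sqrt (3 / ((q : ℝ) + 1)))) atTop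
      (nhds (1 - Phi (Real.sqrt 3))) := by
    rw [hval]
    have h3 := ratio_tendsto.mul (Nq_tendsto.const_mul (Real.sqrt Real.pi)⁻¹)
    refine Tendsto.congr' ?_ h3
    filter_upwards [eventually_ge_atTop 17] with q hq
    have hq' : (17:ℝ) ≤ (q:ℝ) := by exact_mod_cast hq
    have hc0 : 0 < Real.sqrt ((q:ℝ)+1) := Real.sqrt_pos.2 (by linarith)
    have hcsq : Real.sqrt ((q:ℝ)+1) ^ 2 = (q:ℝ)+1 := Real.sq_sqrt (by linarith)
    have hsub := intervalIntegral.integral_comp_div (a := Real.sqrt 3) (b := Real.sqrt ((q:ℝ)+1))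
      (c := Real.sqrt ((q:ℝ)+1)) (f := fun v => (1 - v ^ 2) ^ ((q:ℝ)/2 - 2)) hc0.ne'
    rw [div_self hc0.ne',
      show Real.sqrt 3 / Real.sqrt ((q:ℝ)+1) = Real.sqrt (3/((q:ℝ)+1)) from
        (Real.sqrt_div (by norm_num) _).symm] at hsub
    simp only [div_pow, hcsq] at hsub
    rw [intervalIntegral.integral_of_le (Real.sqrt_le_sqrt (by linarith : (3:ℝ) ≤ (q:ℝ)+1)),
        ← integral_indicator measurableSet_Ioc, smul_eq_mul] at hsub
    have hI : (∫ v in Real.sqrt (3/((q:ℝ)+1))..(1:ℝ), (1 - v ^ 2) ^ ((q:ℝ)/2 - 2))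
        = (Real.sqrt ((q:ℝ)+1))⁻¹ * ∫ u, Set.indicator
            (Set.Ioc (Real.sqrt 3) (Real.sqrt ((q:ℝ)+1)))
            (fun u => (1 - u ^ 2/((q:ℝ)+1)) ^ ((q:ℝ)/2 - 2)) u := by
      rw [hsub, inv_mul_cancel_left₀ hc0.ne']
    simp only [betaCap, Real.Gamma_one_half_eq]
    rw [hI]
    ring
  refine ⟨hmain, hpos, fun h => ?_⟩
  have := tendsto_nhds_unique hmain h
  linarith
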